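/- arXiv:2201.08199 — 2 statements merged into one kernel-verified Lean document; each statement's English description precedes it below -/
import Mathlib

section
/- Let λ be a nonzero ordinal. The set No_{<λ} of surreal numbers of birthday less than λ contains 0 and is closed under addition and negation (i.e., it is an additive subgroup of the surreal numbers) if and only if λ = ω^α for some ordinal α. -/
universe u

namespace SetTheory

/-- Pre-games (removed from Mathlib; restored with the old definition). -/
inductive PGame : Type (u + 1)
  | mk : ∀ α β : Type u, (α → PGame) → (β → PGame) → PGame

namespace PGame

/-- The pair `(x ≤ y, y ≤ x)`, by simultaneous recursion. -/
noncomputable def lePair (x : PGame.{u}) : PGame.{u} → Prop × Prop :=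
  PGame.rec (motive := fun _ => PGame.{u} → Prop × Prop)
    (fun xl xr xL xR ihL ihR y =>
      PGame.rec (motive := fun _ => Prop × Prop)
        (fun yl yr yL yR jhL jhR =>
          (((∀ i, ¬ (ihL i (mk yl yr yL yR)).2) ∧ (∀ j, ¬ (jhR j).2)),
            ((∀ i, ¬ (jhL i).1) ∧ (∀ j, ¬ (ihR j (mk yl yr yL yR)).1)))) y) x

/-- `x ≤ y` iff no left option of `x` is `≥ y` and no right option of `y` is `≤ x`. -/
def le (x y : PGame.{u}) : Prop := (lePair x y).1

instance : LE PGame.{u} := ⟨le⟩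

instance : LT PGame.{u} := ⟨fun x y => x ≤ y ∧ ¬ y ≤ x⟩

instance : HasEquiv PGame.{u} := ⟨fun x y => x ≤ y ∧ y ≤ x⟩

/-- Numeric pre-games. -/
def Numeric : PGame.{u} → Prop
  | mk _ _ xL xR => (∀ i j, xL i < xR j) ∧ (∀ i, Numeric (xL i)) ∧ ∀ j, Numeric (xR j)

/-- The birthday of a pre-game. -/
noncomputable def birthday : PGame.{u} → Ordinal.{u}
  | mk _ _ xL xR =>
    max (⨆ i, Order.succ (birthday (xL i))) (⨆ j, Order.succ (birthday (xR j)))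

instance : Zero PGame.{u} := ⟨mk PEmpty PEmpty PEmpty.elim PEmpty.elim⟩

/-- Negation of pre-games. -/
def neg : PGame.{u} → PGame.{u}
  | mk xl xr xL xR => mk xr xl (fun j => neg (xR j)) (fun i => neg (xL i))

instance : Neg PGame.{u} := ⟨neg⟩

/-- Addition of pre-games. -/
noncomputable def add (x : PGame.{u}) : PGame.{u} → PGame.{u} :=
  PGame.rec (motive := fun _ => PGame.{u} → PGame.{u})
    (fun xl xr xL xR ihL ihR y =>
      PGame.rec (motive := fun _ => PGame.{u})
        (fun yl yr yL yR jhL jhR =>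
          mk (xl ⊕ yl) (xr ⊕ yr) (Sum.elim (fun i => ihL i (mk yl yr yL yR)) jhL)
            (Sum.elim (fun j => ihR j (mk yl yr yL yR)) jhR)) y) x

noncomputable instance : Add PGame.{u} := ⟨add⟩

theorem numeric_zero : Numeric (0 : PGame.{u}) :=
  ⟨fun i => PEmpty.elim i, fun i => PEmpty.elim i, fun j => PEmpty.elim j⟩

end PGame

end SetTheory

open SetTheory in
/-- Surreal numbers: numeric pre-games modulo equivalence. -/
def Surreal : Type (u + 1) :=
  Quot (fun a b : { x : PGame.{u} // x.Numeric } => a.1 ≈ b.1)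

namespace Surreal

open SetTheory in
/-- The surreal number represented by a numeric pre-game. -/
def mk (x : PGame.{u}) (h : x.Numeric) : Surreal.{u} := Quot.mk _ ⟨x, h⟩

open SetTheory in
instance : Zero Surreal.{u} := ⟨mk 0 PGame.numeric_zero⟩

open SetTheory in
open Classical in
/-- Negation, computed on a representative (the result is independent of it). -/
noncomputable instance : Neg Surreal.{u} :=
  ⟨fun x => if h : (-(Quot.out x).1 : PGame.{u}).Numeric then mk _ h else 0⟩

open SetTheory in
open Classical in
/-- Addition, computed on representatives (the result is independent of them). -/
noncomputable instance : Add Surreal.{u} :=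
  ⟨fun x y => if h : ((Quot.out x).1 + (Quot.out y).1 : PGame.{u}).Numeric then mk _ h else 0⟩

end Surreal

/-- The birthday of a surreal number: the least birthday among all numeric
pregames representing it. -/
noncomputable def Surreal.birthday (x : Surreal) : Ordinal :=
  sInf (SetTheory.PGame.birthday '' {p : SetTheory.PGame | ∃ h : p.Numeric, Surreal.mk p h = x})

/-- `No_{<λ}`: the set of surreal numbers of birthday less than `λ`. -/
noncomputable def NoLt (lam : Ordinal) : Set Surreal := {x | x.birthday < lam}

/-!
Birthdays are subadditive for the natural (Hessenberg) sum, `birthday (x + y) ≤ birthday x ♯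
birthday y`, and negation does not increase them. Powers of `ω` are closed under `♯`: by
induction on the exponent, bound `a ♯ b` by adding quotients and remainders modulo a smaller
power `ω ^ γ` separately. Hence `No_{<ω^α}` is a group. Conversely, an ordinal `o` viewed as a
surreal has birthday at most `o`, while the surreal sum of ordinals `a` and `b` has birthday at
least `a + b`; so if `No_{<λ}` is a group then `λ` is additively principal, and the nonzero
additively principal ordinals are exactly the powers of `ω`.
-/

open Order Ordinal SetTheory

namespace Ordinal

/-- The natural (Hessenberg) sum. -/
noncomputable def nadd (a b : Ordinal.{u}) : Ordinal.{u} :=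
  max (⨆ a' : Set.Iio a, succ (nadd a' b)) (⨆ b' : Set.Iio b, succ (nadd a b'))
termination_by (a, b)
decreasing_by
  · exact Prod.Lex.left _ _ a'.2
  · exact Prod.Lex.right _ b'.2

infix:65 " ♯ " => nadd

theorem nadd_def (a b : Ordinal.{u}) : a ♯ b =
    max (⨆ a' : Set.Iio a, succ (a' ♯ b)) (⨆ b' : Set.Iio b, succ (a ♯ b')) := by
  rw [nadd]

theorem nadd_lt_nadd_left {a' a : Ordinal.{u}} (h : a' < a) (b : Ordinal.{u}) :
    a' ♯ b < a ♯ b := by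
  rw [nadd_def a b, lt_max_iff]
  exact .inl <| (lt_succ _).trans_le <|
    Ordinal.le_iSup (fun a' : Set.Iio a => succ (a' ♯ b)) ⟨a', h⟩

theorem nadd_lt_nadd_right {b' b : Ordinal.{u}} (h : b' < b) (a : Ordinal.{u}) :
    a ♯ b' < a ♯ b := by
  rw [nadd_def a b, lt_max_iff]
  exact .inr <| (lt_succ _).trans_le <|
    Ordinal.le_iSup (fun b' : Set.Iio b => succ (a ♯ b')) ⟨b', h⟩

theorem nadd_le_iff {a b c : Ordinal.{u}} :
    a ♯ b ≤ c ↔ (∀ a' < a, a' ♯ b < c) ∧ ∀ b' < b, a ♯ b' < c := by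
  refine ⟨fun h => ⟨fun a' ha' => (nadd_lt_nadd_left ha' b).trans_le h,
    fun b' hb' => (nadd_lt_nadd_right hb' a).trans_le h⟩, fun ⟨ha, hb⟩ => ?_⟩
  rw [nadd_def]
  exact max_le (Ordinal.iSup_le fun a' => succ_le_of_lt (ha _ a'.2))
    (Ordinal.iSup_le fun b' => succ_le_of_lt (hb _ b'.2))

theorem nadd_le_nadd_right {b' b : Ordinal.{u}} (h : b' ≤ b) (a : Ordinal.{u}) :
    a ♯ b' ≤ a ♯ b :=
  h.eq_or_lt.elim (fun h => h ▸ le_rfl) fun h => (nadd_lt_nadd_right h a).le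

theorem nadd_lt_nadd {a a' b b' : Ordinal.{u}} (ha : a' < a) (hb : b' < b) : a' ♯ b' < a ♯ b :=
  (nadd_lt_nadd_left ha b').trans (nadd_lt_nadd_right hb a)

theorem nadd_comm (a b : Ordinal.{u}) : a ♯ b = b ♯ a := by
  induction a using WellFoundedLT.induction generalizing b with | _ a iha
  induction b using WellFoundedLT.induction with | _ b ihb
  refine le_antisymm (nadd_le_iff.2 ⟨fun a' ha' => ?_, fun b' hb' => ?_⟩)
    (nadd_le_iff.2 ⟨fun b' hb' => ?_, fun a' ha' => ?_⟩)
  · rw [iha a' ha']; exact nadd_lt_nadd_right ha' b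
  · rw [ihb b' hb']; exact nadd_lt_nadd_left hb' a
  · rw [← ihb b' hb']; exact nadd_lt_nadd_right hb' a
  · rw [← iha a' ha']; exact nadd_lt_nadd_left ha' b

theorem nadd_zero (a : Ordinal.{u}) : a ♯ 0 = a := by
  induction a using WellFoundedLT.induction with | _ a ih
  refine le_antisymm (nadd_le_iff.2 ⟨fun a' ha' => (ih a' ha').symm ▸ ha', fun b' hb' => ?_⟩)
    (le_of_forall_lt fun c hc => ih c hc ▸ nadd_lt_nadd_left hc 0)
  exact absurd hb' zero_le.not_gt

theorem nadd_succ (a b : Ordinal.{u}) : a ♯ succ b = succ (a ♯ b) := by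
  induction a using WellFoundedLT.induction with | _ a ih
  refine le_antisymm (nadd_le_iff.2 ⟨fun a' ha' => ?_, fun b' hb' => ?_⟩)
    (succ_le_of_lt (nadd_lt_nadd_right (lt_succ b) a))
  · rw [ih a' ha']; exact succ_lt_succ (nadd_lt_nadd_left ha' b)
  · exact lt_succ_iff.2 (nadd_le_nadd_right (lt_succ_iff.1 hb') a)

theorem nadd_natCast (a : Ordinal.{u}) (n : ℕ) : a ♯ n = a + n := by
  induction n with
  | zero => rw [Nat.cast_zero, nadd_zero, add_zero]
  | succ n ih =>
    rw [Nat.cast_succ, ← succ_eq_add_one, nadd_succ, ih, succ_eq_add_one, succ_eq_add_one,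
      add_assoc]

noncomputable def blockNadd (e a b : Ordinal.{u}) : Ordinal.{u} :=
  e * (a / e ♯ b / e) + (a % e ♯ b % e)

theorem blockNadd_comm (e a b : Ordinal.{u}) : blockNadd e a b = blockNadd e b a := by
  rw [blockNadd, blockNadd, nadd_comm (a / e), nadd_comm (a % e)]

section IsPrincipalNadd

variable {e : Ordinal.{u}} (he : IsPrincipal nadd e) (he0 : e ≠ 0)
include he he0

theorem blockNadd_lt_mul_succ (a b : Ordinal.{u}) :
    blockNadd e a b < e * succ (a / e ♯ b / e) := by
  rw [succ_eq_add_one, mul_add_one]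
  exact add_lt_add_right (he (mod_lt a he0) (mod_lt b he0)) _

theorem blockNadd_lt_blockNadd_left {a' a : Ordinal.{u}} (h : a' < a) (b : Ordinal.{u}) :
    blockNadd e a' b < blockNadd e a b := by
  rcases (div_le_left h.le e).lt_or_eq with hdiv | hdiv
  · calc blockNadd e a' b < e * succ (a' / e ♯ b / e) := blockNadd_lt_mul_succ he he0 a' b
      _ ≤ e * (a / e ♯ b / e) := mul_le_mul_right (succ_le_of_lt (nadd_lt_nadd_left hdiv _)) e
      _ ≤ blockNadd e a b := le_self_add
  · have hmod : a' % e < a % e := by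
      rwa [← div_add_mod a' e, ← div_add_mod a e, hdiv, add_lt_add_iff_left] at h
    rw [blockNadd, blockNadd, hdiv]
    exact add_lt_add_right (nadd_lt_nadd_left hmod _) _

theorem nadd_le_blockNadd (a b : Ordinal.{u}) : a ♯ b ≤ blockNadd e a b := by
  induction a using WellFoundedLT.induction generalizing b with | _ a iha
  induction b using WellFoundedLT.induction with | _ b ihb
  refine nadd_le_iff.2 ⟨fun a' ha' => ?_, fun b' hb' => ?_⟩
  · exact (iha a' ha' b).trans_lt (blockNadd_lt_blockNadd_left he he0 ha' b)
  · have h := blockNadd_lt_blockNadd_left he he0 hb' a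
    rw [blockNadd_comm e b', blockNadd_comm e b] at h
    exact (ihb b' hb').trans_lt h

theorem nadd_lt_mul_nadd {a b m n : Ordinal.{u}} (ha : a < e * m) (hb : b < e * n) :
    a ♯ b < e * (m ♯ n) :=
  calc a ♯ b ≤ blockNadd e a b := nadd_le_blockNadd he he0 a b
    _ < e * succ (a / e ♯ b / e) := blockNadd_lt_mul_succ he he0 a b
    _ ≤ e * (m ♯ n) := mul_le_mul_right (succ_le_of_lt (nadd_lt_nadd
        ((lt_mul_iff_div_lt he0).1 ha) ((lt_mul_iff_div_lt he0).1 hb))) e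

end IsPrincipalNadd

theorem isPrincipal_nadd_omega0_opow (c : Ordinal.{u}) : IsPrincipal nadd (ω ^ c) := by
  induction c using WellFoundedLT.induction with | _ c ih
  intro a b ha hb
  rcases eq_or_ne c 0 with rfl | hc
  · rw [opow_zero, Order.lt_one_iff] at ha hb
    rw [ha, hb, nadd_zero, opow_zero]
    exact zero_lt_one
  obtain ⟨γ₁, hγ₁, m, hm⟩ := (lt_omega0_opow hc).1 ha
  obtain ⟨γ₂, hγ₂, n, hn⟩ := (lt_omega0_opow hc).1 hb
  set γ := max γ₁ γ₂
  have hγ : γ < c := max_lt hγ₁ hγ₂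
  have opow_mul_le {δ} (h : δ ≤ γ) (k : ℕ) : ω ^ δ * k ≤ ω ^ γ * k :=
    mul_le_mul_left (opow_le_opow_right omega0_pos h) _
  calc a ♯ b < ω ^ γ * (m ♯ n : Ordinal) :=
        nadd_lt_mul_nadd (ih γ hγ) (opow_ne_zero _ omega0_ne_zero)
          (hm.trans_le (opow_mul_le (le_max_left _ _) m))
          (hn.trans_le (opow_mul_le (le_max_right _ _) n))
    _ = ω ^ γ * (m + n : ℕ) := by rw [nadd_natCast, Nat.cast_add]
    _ < ω ^ c := opow_mul_lt_opow (natCast_lt_omega0 _) hγ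

end Ordinal

namespace SetTheory.PGame

def LeftMoves : PGame.{u} → Type u
  | mk l _ _ _ => l

def RightMoves : PGame.{u} → Type u
  | mk _ r _ _ => r

def moveLeft : (x : PGame.{u}) → LeftMoves x → PGame.{u}
  | mk _ _ L _ => L

def moveRight : (x : PGame.{u}) → RightMoves x → PGame.{u}
  | mk _ _ _ R => R

theorem lePair_swap (x y : PGame.{u}) :
    ((lePair x y).2 ↔ (lePair y x).1) ∧ ((lePair y x).2 ↔ (lePair x y).1) := by
  induction x generalizing y with | mk xl xr xL xR ihL ihR
  induction y with | mk yl yr yL yR jhL jhR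
  constructor
  · show ((∀ i, ¬ (lePair (mk xl xr xL xR) (yL i)).1) ∧
        (∀ j, ¬ (lePair (xR j) (mk yl yr yL yR)).1)) ↔
      ((∀ i, ¬ (lePair (yL i) (mk xl xr xL xR)).2) ∧
        (∀ j, ¬ (lePair (mk yl yr yL yR) (xR j)).2))
    simp only [(jhL _).2, (ihR _ _).2]
  · show ((∀ i, ¬ (lePair (mk yl yr yL yR) (xL i)).1) ∧
        (∀ j, ¬ (lePair (yR j) (mk xl xr xL xR)).1)) ↔
      ((∀ i, ¬ (lePair (xL i) (mk yl yr yL yR)).2) ∧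
        (∀ j, ¬ (lePair (mk xl xr xL xR) (yR j)).2))
    simp only [(ihL _ _).1, (jhR _).1]

theorem mk_le_mk {xl xr : Type u} {xL : xl → PGame.{u}} {xR : xr → PGame.{u}}
    {yl yr : Type u} {yL : yl → PGame.{u}} {yR : yr → PGame.{u}} :
    mk xl xr xL xR ≤ mk yl yr yL yR ↔
      (∀ i, ¬ mk yl yr yL yR ≤ xL i) ∧ ∀ j, ¬ yR j ≤ mk xl xr xL xR :=
  (Iff.rfl : _ ↔ (∀ i, ¬ (lePair (xL i) (mk yl yr yL yR)).2) ∧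
      ∀ j, ¬ (lePair (mk xl xr xL xR) (yR j)).2).trans <|
    and_congr (forall_congr' fun _ => not_congr (lePair_swap _ _).1)
      (forall_congr' fun _ => not_congr (lePair_swap _ _).1)

theorem le_def {x y : PGame.{u}} :
    x ≤ y ↔ (∀ i, ¬ y ≤ x.moveLeft i) ∧ ∀ j, ¬ y.moveRight j ≤ x := by
  cases x; cases y; exact mk_le_mk

theorem not_le_iff_exists_le {x y : PGame.{u}} :
    ¬ y ≤ x ↔ (∃ i, x ≤ y.moveLeft i) ∨ ∃ j, x.moveRight j ≤ y := by
  simp only [le_def (x := y), not_and_or, not_forall, not_not]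

protected theorem le_refl (x : PGame.{u}) : x ≤ x := by
  induction x with | mk xl xr xL xR ihL ihR
  exact le_def.2 ⟨fun i h => (le_def.1 h).1 i (ihL i), fun j h => (le_def.1 h).2 j (ihR j)⟩

theorem le_trans_aux {x y z : PGame.{u}}
    (h₁ : ∀ {i}, y ≤ z → z ≤ x.moveLeft i → y ≤ x.moveLeft i)
    (h₂ : ∀ {j}, z.moveRight j ≤ x → x ≤ y → z.moveRight j ≤ y) (hxy : x ≤ y) (hyz : y ≤ z) :
    x ≤ z :=
  le_def.2 ⟨fun i h => (le_def.1 hxy).1 i (h₁ hyz h), fun j h => (le_def.1 hyz).2 j (h₂ h hxy)⟩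

/-- The three rotations have to be proved together: each one needs the other two for options. -/
theorem le_trans_cycle (x y z : PGame.{u}) :
    (x ≤ y → y ≤ z → x ≤ z) ∧ (y ≤ z → z ≤ x → y ≤ x) ∧ (z ≤ x → x ≤ y → z ≤ y) := by
  induction x generalizing y z with | mk xl xr xL xR IHxl IHxr
  induction y generalizing z with | mk yl yr yL yR IHyl IHyr
  induction z with | mk zl zr zL zR IHzl IHzr
  exact ⟨le_trans_aux (fun {i} => (IHxl i _ _).2.1) fun {j} => (IHzr j).2.2,
    le_trans_aux (fun {i} => (IHyl i _).2.2) fun {j} => (IHxr j _ _).1,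
    le_trans_aux (fun {i} => (IHzl i).1) fun {j} => (IHyr j _).2.1⟩

instance : Preorder PGame.{u} where
  le := (· ≤ ·)
  lt := (· < ·)
  le_refl := PGame.le_refl
  le_trans x y z := (le_trans_cycle x y z).1
  lt_iff_le_not_ge _ _ := Iff.rfl

theorem not_le_moveLeft (x : PGame.{u}) (i : x.LeftMoves) : ¬ x ≤ x.moveLeft i :=
  (le_def.1 le_rfl).1 i

theorem not_moveRight_le (x : PGame.{u}) (j : x.RightMoves) : ¬ x.moveRight j ≤ x :=
  (le_def.1 le_rfl).2 j

theorem birthday_mk {xl xr : Type u} (xL : xl → PGame.{u}) (xR : xr → PGame.{u}) :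
    birthday (mk xl xr xL xR) =
      max (⨆ i, succ (birthday (xL i))) (⨆ j, succ (birthday (xR j))) := by
  rw [birthday]

theorem birthday_moveLeft_lt (x : PGame.{u}) (i : x.LeftMoves) :
    birthday (x.moveLeft i) < birthday x := by
  cases x with | mk xl xr xL xR
  rw [birthday_mk, lt_max_iff]
  exact .inl <| (lt_succ _).trans_le (Ordinal.le_iSup (fun i => succ (birthday (xL i))) i)

theorem birthday_moveRight_lt (x : PGame.{u}) (j : x.RightMoves) :
    birthday (x.moveRight j) < birthday x := by
  cases x with | mk xl xr xL xR
  rw [birthday_mk, lt_max_iff]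
  exact .inr <| (lt_succ _).trans_le (Ordinal.le_iSup (fun j => succ (birthday (xR j))) j)

theorem birthday_zero : birthday (0 : PGame.{u}) = 0 := by
  rw [← nonpos_iff_eq_zero]
  exact max_le (Ordinal.iSup_le fun i => i.elim) (Ordinal.iSup_le fun j => j.elim)

theorem numeric_def {x : PGame.{u}} : Numeric x ↔ (∀ i j, x.moveLeft i < x.moveRight j) ∧
    (∀ i, Numeric (x.moveLeft i)) ∧ ∀ j, Numeric (x.moveRight j) := by
  cases x; rw [Numeric]; rfl

theorem Numeric.moveLeft_lt_and_lt_moveRight {x : PGame.{u}} (hx : Numeric x) :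
    (∀ i, x.moveLeft i < x) ∧ ∀ j, x < x.moveRight j := by
  induction x with | mk xl xr xL xR ihL ihR
  obtain ⟨hLR, hL, hR⟩ := numeric_def.1 hx
  refine ⟨fun i => ⟨le_def.2 ⟨fun i' h => ?_, fun j h => (hLR i j).2 h⟩, not_le_moveLeft _ i⟩,
    fun j => ⟨le_def.2 ⟨fun i h => (hLR i j).2 h, fun j' h => ?_⟩, not_moveRight_le _ j⟩⟩
  · exact not_le_moveLeft (mk xl xr xL xR) i (h.trans ((ihL i (hL i)).1 i').le)
  · exact not_moveRight_le (mk xl xr xL xR) j (((ihR j (hR j)).2 j').le.trans h)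

theorem Numeric.moveLeft_lt {x : PGame.{u}} (hx : Numeric x) (i : x.LeftMoves) :
    x.moveLeft i < x :=
  hx.moveLeft_lt_and_lt_moveRight.1 i

theorem Numeric.lt_moveRight {x : PGame.{u}} (hx : Numeric x) (j : x.RightMoves) :
    x < x.moveRight j :=
  hx.moveLeft_lt_and_lt_moveRight.2 j

theorem neg_mk {xl xr : Type u} (xL : xl → PGame.{u}) (xR : xr → PGame.{u}) :
    -(mk xl xr xL xR) = mk xr xl (fun j => -(xR j)) (fun i => -(xL i)) := rfl

theorem neg_le_neg_iff_and (x y : PGame.{u}) :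
    (-y ≤ -x ↔ x ≤ y) ∧ (-x ≤ -y ↔ y ≤ x) := by
  induction x generalizing y with | mk xl xr xL xR ihL ihR
  induction y with | mk yl yr yL yR jhL jhR
  rw [neg_mk, neg_mk, mk_le_mk, mk_le_mk, mk_le_mk, mk_le_mk]
  exact ⟨and_comm.trans (and_congr (forall_congr' fun i => not_congr (ihL i (mk yl yr yL yR)).2)
      (forall_congr' fun j => not_congr (jhR j).2)),
    and_comm.trans (and_congr (forall_congr' fun j => not_congr (jhL j).1)
      (forall_congr' fun i => not_congr (ihR i (mk yl yr yL yR)).1))⟩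

protected theorem neg_le_neg_iff {x y : PGame.{u}} : -y ≤ -x ↔ x ≤ y :=
  (neg_le_neg_iff_and x y).1

theorem neg_congr {x y : PGame.{u}} (h : x ≈ y) : -x ≈ -y :=
  ⟨PGame.neg_le_neg_iff.2 h.2, PGame.neg_le_neg_iff.2 h.1⟩

theorem Numeric.neg {x : PGame.{u}} (hx : Numeric x) : Numeric (-x) := by
  induction x with | mk xl xr xL xR ihL ihR
  obtain ⟨hLR, hL, hR⟩ := numeric_def.1 hx
  exact numeric_def.2 ⟨fun j i => ⟨PGame.neg_le_neg_iff.2 (hLR i j).1,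
    fun h => (hLR i j).2 (PGame.neg_le_neg_iff.1 h)⟩, fun j => ihR j (hR j), fun i => ihL i (hL i)⟩

theorem birthday_neg (x : PGame.{u}) : birthday (-x) = birthday x := by
  induction x with | mk xl xr xL xR ihL ihR
  rw [neg_mk, birthday_mk, birthday_mk, max_comm]
  simp only [ihL, ihR]

theorem add_mk {xl xr yl yr : Type u} (xL : xl → PGame.{u}) (xR : xr → PGame.{u})
    (yL : yl → PGame.{u}) (yR : yr → PGame.{u}) :
    mk xl xr xL xR + mk yl yr yL yR =
      mk (xl ⊕ yl) (xr ⊕ yr)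
        (Sum.elim (fun i => xL i + mk yl yr yL yR) (fun k => mk xl xr xL xR + yL k))
        (Sum.elim (fun j => xR j + mk yl yr yL yR) (fun k => mk xl xr xL xR + yR k)) := rfl

theorem forall_leftMoves_add {x z : PGame.{u}} {P : PGame.{u} → Prop} :
    (∀ i, P ((x + z).moveLeft i)) ↔ (∀ i, P (x.moveLeft i + z)) ∧ ∀ k, P (x + z.moveLeft k) := by
  cases x; cases z
  exact ⟨fun h => ⟨fun i => h (.inl i), fun k => h (.inr k)⟩, fun h => Sum.rec h.1 h.2⟩

theorem forall_rightMoves_add {x z : PGame.{u}} {P : PGame.{u} → Prop} :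
    (∀ j, P ((x + z).moveRight j)) ↔
      (∀ j, P (x.moveRight j + z)) ∧ ∀ k, P (x + z.moveRight k) := by
  cases x; cases z
  exact ⟨fun h => ⟨fun j => h (.inl j), fun k => h (.inr k)⟩, fun h => Sum.rec h.1 h.2⟩

section AddLe

variable {x z w : PGame.{u}}

theorem not_le_moveLeft_add_of_add_le (H : x + z ≤ w) (i : x.LeftMoves) :
    ¬ w ≤ x.moveLeft i + z :=
  (forall_leftMoves_add (P := fun t => ¬ w ≤ t)).1 (le_def.1 H).1 |>.1 i

theorem not_le_add_moveLeft_of_add_le (H : x + z ≤ w) (k : z.LeftMoves) :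
    ¬ w ≤ x + z.moveLeft k :=
  (forall_leftMoves_add (P := fun t => ¬ w ≤ t)).1 (le_def.1 H).1 |>.2 k

theorem not_moveRight_add_le_of_le_add (H : w ≤ x + z) (j : x.RightMoves) :
    ¬ x.moveRight j + z ≤ w :=
  (forall_rightMoves_add (P := fun t => ¬ t ≤ w)).1 (le_def.1 H).2 |>.1 j

theorem not_add_moveRight_le_of_le_add (H : w ≤ x + z) (k : z.RightMoves) :
    ¬ x + z.moveRight k ≤ w :=
  (forall_rightMoves_add (P := fun t => ¬ t ≤ w)).1 (le_def.1 H).2 |>.2 k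

end AddLe

protected theorem add_le_add_left {x y : PGame.{u}} (h : x ≤ y) (z : PGame.{u}) :
    x + z ≤ y + z := by
  refine le_def.2 ⟨forall_leftMoves_add (P := fun t => ¬ y + z ≤ t) |>.2
      ⟨fun i hi => ?_, fun k hk => ?_⟩,
    forall_rightMoves_add (P := fun t => ¬ t ≤ x + z) |>.2 ⟨fun j hj => ?_, fun k hk => ?_⟩⟩
  · rcases not_le_iff_exists_le.1 ((le_def.1 h).1 i) with ⟨i', h'⟩ | ⟨j, h'⟩
    · exact not_le_moveLeft_add_of_add_le hi i' (PGame.add_le_add_left h' z)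
    · exact not_moveRight_add_le_of_le_add hi j (PGame.add_le_add_left h' z)
  · exact not_le_add_moveLeft_of_add_le hk k (PGame.add_le_add_left h _)
  · rcases not_le_iff_exists_le.1 ((le_def.1 h).2 j) with ⟨i, h'⟩ | ⟨j', h'⟩
    · exact not_le_moveLeft_add_of_add_le hj i (PGame.add_le_add_left h' z)
    · exact not_moveRight_add_le_of_le_add hj j' (PGame.add_le_add_left h' z)
  · exact not_add_moveRight_le_of_le_add hk k (PGame.add_le_add_left h _)
termination_by (birthday x, birthday y, birthday z)
decreasing_by
  · exact Prod.Lex.left _ _ (birthday_moveLeft_lt _ _)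
  · exact Prod.Lex.left _ _ ((birthday_moveRight_lt _ _).trans (birthday_moveLeft_lt _ _))
  · exact Prod.Lex.right _ (Prod.Lex.right _ (birthday_moveLeft_lt _ _))
  · exact Prod.Lex.right _ (Prod.Lex.left _ _
      ((birthday_moveLeft_lt _ _).trans (birthday_moveRight_lt _ _)))
  · exact Prod.Lex.left _ _ (birthday_moveRight_lt _ _)
  · exact Prod.Lex.right _ (Prod.Lex.right _ (birthday_moveRight_lt _ _))

protected theorem add_le_add_right {y z : PGame.{u}} (h : y ≤ z) (x : PGame.{u}) :
    x + y ≤ x + z := by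
  refine le_def.2 ⟨forall_leftMoves_add (P := fun t => ¬ x + z ≤ t) |>.2
      ⟨fun i hi => ?_, fun k hk => ?_⟩,
    forall_rightMoves_add (P := fun t => ¬ t ≤ x + y) |>.2 ⟨fun j hj => ?_, fun k hk => ?_⟩⟩
  · exact not_le_moveLeft_add_of_add_le hi i (PGame.add_le_add_right h _)
  · rcases not_le_iff_exists_le.1 ((le_def.1 h).1 k) with ⟨k', h'⟩ | ⟨j, h'⟩
    · exact not_le_add_moveLeft_of_add_le hk k' (PGame.add_le_add_right h' x)
    · exact not_add_moveRight_le_of_le_add hk j (PGame.add_le_add_right h' x)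
  · exact not_moveRight_add_le_of_le_add hj j (PGame.add_le_add_right h _)
  · rcases not_le_iff_exists_le.1 ((le_def.1 h).2 k) with ⟨i, h'⟩ | ⟨k', h'⟩
    · exact not_le_add_moveLeft_of_add_le hk i (PGame.add_le_add_right h' x)
    · exact not_add_moveRight_le_of_le_add hk k' (PGame.add_le_add_right h' x)
termination_by (birthday x, birthday y, birthday z)
decreasing_by
  · exact Prod.Lex.left _ _ (birthday_moveLeft_lt _ _)
  · exact Prod.Lex.right _ (Prod.Lex.left _ _ (birthday_moveLeft_lt _ _))
  · exact Prod.Lex.right _ (Prod.Lex.left _ _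
      ((birthday_moveRight_lt _ _).trans (birthday_moveLeft_lt _ _)))
  · exact Prod.Lex.left _ _ (birthday_moveRight_lt _ _)
  · exact Prod.Lex.right _ (Prod.Lex.right _
      ((birthday_moveLeft_lt _ _).trans (birthday_moveRight_lt _ _)))
  · exact Prod.Lex.right _ (Prod.Lex.left _ _ (birthday_moveRight_lt _ _))

instance : AddRightMono PGame.{u} := ⟨fun z _ _ h => PGame.add_le_add_left h z⟩

instance : AddLeftMono PGame.{u} := ⟨fun x _ _ h => PGame.add_le_add_right h x⟩

instance : AddRightStrictMono PGame.{u} where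
  elim z x y h := by
    refine ⟨add_le_add_left h.1 z, fun H => ?_⟩
    rcases not_le_iff_exists_le.1 h.2 with ⟨i, hi⟩ | ⟨j, hj⟩
    · exact not_le_moveLeft_add_of_add_le H i (add_le_add_left hi z)
    · exact not_moveRight_add_le_of_le_add H j (add_le_add_left hj z)

instance : AddLeftStrictMono PGame.{u} where
  elim x y z h := by
    refine ⟨add_le_add_right h.1 x, fun H => ?_⟩
    rcases not_le_iff_exists_le.1 h.2 with ⟨i, hi⟩ | ⟨j, hj⟩
    · exact not_le_add_moveLeft_of_add_le H i (add_le_add_right hi x)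
    · exact not_add_moveRight_le_of_le_add H j (add_le_add_right hj x)

theorem add_congr {x x' y y' : PGame.{u}} (hx : x ≈ x') (hy : y ≈ y') : x + y ≈ x' + y' :=
  ⟨add_le_add hx.1 hy.1, add_le_add hx.2 hy.2⟩

theorem Numeric.add {x y : PGame.{u}} (hx : Numeric x) (hy : Numeric y) : Numeric (x + y) := by
  induction x generalizing y with | mk xl xr xL xR ihL ihR
  induction y with | mk yl yr yL yR jhL jhR
  obtain ⟨hxLR, hxL, hxR⟩ := numeric_def.1 hx
  obtain ⟨hyLR, hyL, hyR⟩ := numeric_def.1 hy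
  rw [add_mk]
  refine numeric_def.2 ⟨?_, ?_, ?_⟩
  · rintro (i | k) (j | l)
    · exact add_lt_add_left (hxLR i j) _
    · exact add_lt_add_of_lt_of_le (hx.moveLeft_lt i) (hy.lt_moveRight l).le
    · exact add_lt_add_of_le_of_lt (hx.lt_moveRight j).le (hy.moveLeft_lt k)
    · exact add_lt_add_right (hyLR k l) _
  · rintro (i | k)
    exacts [ihL i (hxL i) hy, jhL k (hyL k)]
  · rintro (j | l)
    exacts [ihR j (hxR j) hy, jhR l (hyR l)]

theorem birthday_add_le_nadd (x y : PGame.{u}) :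
    birthday (x + y) ≤ birthday x ♯ birthday y := by
  induction x generalizing y with | mk xl xr xL xR ihL ihR
  induction y with | mk yl yr yL yR jhL jhR
  rw [add_mk, birthday_mk]
  refine max_le (Ordinal.iSup_le fun s => succ_le_of_lt ?_)
    (Ordinal.iSup_le fun s => succ_le_of_lt ?_)
  · rcases s with i | k
    · exact (ihL i _).trans_lt (nadd_lt_nadd_left (birthday_moveLeft_lt (mk xl xr xL xR) i) _)
    · exact (jhL k).trans_lt (nadd_lt_nadd_right (birthday_moveLeft_lt (mk yl yr yL yR) k) _)
  · rcases s with j | k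
    · exact (ihR j _).trans_lt (nadd_lt_nadd_left (birthday_moveRight_lt (mk xl xr xL xR) j) _)
    · exact (jhR k).trans_lt (nadd_lt_nadd_right (birthday_moveRight_lt (mk yl yr yL yR) k) _)

theorem le_add_of_isEmpty_rightMoves (z : PGame.{u}) [IsEmpty z.RightMoves] (x : PGame.{u}) :
    x ≤ x + z := by
  induction x with | mk xl xr xL xR ihL ihR
  refine le_def.2 ⟨fun i h => not_le_moveLeft_add_of_add_le h i (ihL i),
    forall_rightMoves_add (P := fun t => ¬ t ≤ mk xl xr xL xR) |>.2
      ⟨fun j hj => not_moveRight_le _ j ((ihR j).trans hj), isEmptyElim⟩⟩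

end SetTheory.PGame

noncomputable def Ordinal.toPGame (o : Ordinal.{u}) : PGame.{u} :=
  PGame.mk o.ToType PEmpty (fun x => toPGame (typein (α := o.ToType) (· < ·) x)) PEmpty.elim
termination_by o
decreasing_by exact typein_lt_self x

namespace Ordinal

open PGame

theorem toPGame_def (o : Ordinal.{u}) : o.toPGame =
    PGame.mk o.ToType PEmpty (fun x => (typein (α := o.ToType) (· < ·) x).toPGame)
      PEmpty.elim := by
  rw [toPGame]

theorem numeric_toPGame (o : Ordinal.{u}) : o.toPGame.Numeric := by
  induction o using WellFoundedLT.induction with | _ o ih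
  rw [toPGame_def]
  exact numeric_def.2 ⟨fun _ j => j.elim, fun x => ih _ (typein_lt_self x), fun j => j.elim⟩

instance isEmpty_rightMoves_toPGame (o : Ordinal.{u}) : IsEmpty o.toPGame.RightMoves := by
  rw [toPGame_def]
  exact inferInstanceAs (IsEmpty PEmpty)

theorem exists_moveLeft_toPGame_eq {c o : Ordinal.{u}} (h : c < o) :
    ∃ i, o.toPGame.moveLeft i = c.toPGame := by
  have hc : c < type (α := o.ToType) (· < ·) := by rwa [type_toType]
  rw [toPGame_def o]
  exact ⟨enum (α := o.ToType) (· < ·) ⟨c, hc⟩, by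
    show (typein (α := o.ToType) (· < ·) (enum (α := o.ToType) (· < ·) _)).toPGame = _
    rw [typein_enum]⟩

theorem birthday_toPGame_le (o : Ordinal.{u}) : o.toPGame.birthday ≤ o := by
  induction o using WellFoundedLT.induction with | _ o ih
  rw [toPGame_def, birthday_mk]
  exact max_le (Ordinal.iSup_le fun x =>
      succ_le_of_lt ((ih _ (typein_lt_self x)).trans_lt (typein_lt_self x)))
    (Ordinal.iSup_le fun j => j.elim)

theorem le_birthday_of_toPGame_le {o : Ordinal.{u}} {p : PGame.{u}} (h : o.toPGame ≤ p) :
    o ≤ p.birthday := by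
  induction o using WellFoundedLT.induction generalizing p with | _ o ih
  refine le_of_forall_lt fun c hc => ?_
  obtain ⟨i, hi⟩ := exists_moveLeft_toPGame_eq hc
  have hp : ¬ p ≤ c.toPGame := hi ▸ (le_def.1 h).1 i
  rcases not_le_iff_exists_le.1 hp with ⟨k, hk⟩ | ⟨j, -⟩
  · exact (ih c hc hk).trans_lt (birthday_moveLeft_lt p k)
  · exact isEmptyElim j

theorem toPGame_add_le (a b : Ordinal.{u}) : (a + b).toPGame ≤ a.toPGame + b.toPGame := by
  induction b using WellFoundedLT.induction with | _ b ih
  rw [toPGame_def (a + b)]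
  refine le_def.2 ⟨fun x H => ?_, (forall_rightMoves_add (P := fun t => ¬ t ≤ _)).2
    ⟨isEmptyElim, isEmptyElim⟩⟩
  have H' : a.toPGame + b.toPGame ≤ (typein (α := (a + b).ToType) (· < ·) x).toPGame := H
  have hc := typein_lt_self x
  generalize typein (α := (a + b).ToType) (· < ·) x = c at H' hc
  rcases lt_or_ge c a with hca | hac
  · obtain ⟨i, hi⟩ := exists_moveLeft_toPGame_eq hca
    exact not_le_moveLeft_add_of_add_le H' i (hi ▸ le_add_of_isEmpty_rightMoves _ _)
  · obtain ⟨d, rfl⟩ := exists_add_of_le hac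
    have hd : d < b := lt_of_add_lt_add_left hc
    obtain ⟨k, hk⟩ := exists_moveLeft_toPGame_eq hd
    exact not_le_add_moveLeft_of_add_le H' k (hk ▸ ih d hd)

end Ordinal

namespace Surreal

open PGame

theorem mk_eq_mk {p q : PGame.{u}} {hp : p.Numeric} {hq : q.Numeric} :
    mk p hp = mk q hq ↔ p ≈ q := by
  refine ⟨fun h => ?_, fun h => Quot.sound h⟩
  have e : Equivalence (fun a b : { x : PGame.{u} // x.Numeric } => a.1 ≈ b.1) :=
    ⟨fun _ => AntisymmRel.refl _ _, AntisymmRel.symm, AntisymmRel.trans⟩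
  exact e.eqvGen_iff.1 (Quot.eqvGen_exact h)

theorem out_equiv {p : PGame.{u}} (hp : p.Numeric) : (Quot.out (mk p hp)).1 ≈ p :=
  mk_eq_mk.1 (Quot.out_eq (mk p hp))

open Classical in
theorem mk_add {p q : PGame.{u}} (hp : p.Numeric) (hq : q.Numeric) :
    mk p hp + mk q hq = mk (p + q) (hp.add hq) := by
  show dite _ _ _ = _
  rw [dif_pos ((Quot.out (mk p hp)).2.add (Quot.out (mk q hq)).2)]
  exact mk_eq_mk.2 (add_congr (out_equiv hp) (out_equiv hq))

open Classical in
theorem mk_neg {p : PGame.{u}} (hp : p.Numeric) : -mk p hp = mk (-p) hp.neg := by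
  show dite _ _ _ = _
  rw [dif_pos (Quot.out (mk p hp)).2.neg]
  exact mk_eq_mk.2 (neg_congr (out_equiv hp))

theorem birthday_mk_le {p : PGame.{u}} (hp : p.Numeric) : (mk p hp).birthday ≤ p.birthday :=
  csInf_le' ⟨p, ⟨hp, rfl⟩, rfl⟩

theorem exists_birthday_eq (x : Surreal.{u}) :
    ∃ p hp, mk p hp = x ∧ p.birthday = x.birthday := by
  obtain ⟨⟨p, hp⟩, rfl⟩ := Quot.exists_rep x
  obtain ⟨q, ⟨hq, hqx⟩, hb⟩ := csInf_mem (s := PGame.birthday '' {q | ∃ hq, mk q hq = mk p hp})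
    ⟨p.birthday, p, ⟨hp, rfl⟩, rfl⟩
  exact ⟨q, hq, hqx, hb⟩

theorem birthday_zero : (0 : Surreal.{u}).birthday = 0 :=
  nonpos_iff_eq_zero.1 <| (birthday_mk_le numeric_zero).trans_eq PGame.birthday_zero

theorem birthday_neg_le (x : Surreal.{u}) : (-x).birthday ≤ x.birthday := by
  obtain ⟨p, hp, rfl, hb⟩ := exists_birthday_eq x
  rw [mk_neg, ← hb, ← PGame.birthday_neg]
  exact birthday_mk_le _

theorem birthday_add_le (x y : Surreal.{u}) : (x + y).birthday ≤ x.birthday ♯ y.birthday := by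
  obtain ⟨p, hp, rfl, hbp⟩ := exists_birthday_eq x
  obtain ⟨q, hq, rfl, hbq⟩ := exists_birthday_eq y
  rw [mk_add, ← hbp, ← hbq]
  exact (birthday_mk_le _).trans (birthday_add_le_nadd p q)

end Surreal

noncomputable def Ordinal.toSurreal (o : Ordinal.{u}) : Surreal.{u} :=
  Surreal.mk o.toPGame o.numeric_toPGame

namespace Ordinal

theorem birthday_toSurreal_le (o : Ordinal.{u}) : o.toSurreal.birthday ≤ o :=
  (Surreal.birthday_mk_le _).trans (birthday_toPGame_le o)

theorem add_le_birthday_toSurreal_add (a b : Ordinal.{u}) :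
    a + b ≤ (a.toSurreal + b.toSurreal).birthday := by
  obtain ⟨p, hp, hpab, hb⟩ := Surreal.exists_birthday_eq (a.toSurreal + b.toSurreal)
  rw [toSurreal, toSurreal, Surreal.mk_add, Surreal.mk_eq_mk] at hpab
  exact hb ▸ le_birthday_of_toPGame_le ((toPGame_add_le a b).trans hpab.2)

end Ordinal

theorem noLt_isAddSubgroup_iff_general (lam : Ordinal) :
    ((0 : Surreal) ∈ NoLt lam ∧
        (∀ x ∈ NoLt lam, ∀ y ∈ NoLt lam, x + y ∈ NoLt lam) ∧
        (∀ x ∈ NoLt lam, -x ∈ NoLt lam)) ↔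
      ∃ a : Ordinal, lam = Ordinal.omega0 ^ a := by
  constructor
  · rintro ⟨hzero, hadd, -⟩
    have hlam : lam ≠ 0 := (Surreal.birthday_zero ▸ hzero : (0 : Ordinal) < lam).ne'
    have hprin : IsPrincipal (· + ·) lam := fun a b ha hb =>
      (add_le_birthday_toSurreal_add a b).trans_lt <| hadd _
        ((birthday_toSurreal_le a).trans_lt ha) _ ((birthday_toSurreal_le b).trans_lt hb)
    obtain ⟨a, rfl⟩ := (isPrincipal_add_iff_zero_or_omega0_opow.1 hprin).resolve_left hlam
    exact ⟨a, rfl⟩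
  · rintro ⟨a, rfl⟩
    refine ⟨?_, fun x hx y hy => ?_, fun x hx => ?_⟩
    · exact Surreal.birthday_zero.trans_lt (opow_pos a omega0_pos)
    · exact (Surreal.birthday_add_le x y).trans_lt (isPrincipal_nadd_omega0_opow a hx hy)
    · exact (Surreal.birthday_neg_le x).trans_lt hx

/-- For a nonzero ordinal `λ`, `No_{<λ}` is an additive subgroup of the surreals
(contains 0, closed under addition and negation) iff `λ = ω ^ α` for some ordinal `α`. -/
theorem noLt_isAddSubgroup_iff (lam : Ordinal) (hlam : lam ≠ 0) :
    ((0 : Surreal) ∈ NoLt lam ∧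
        (∀ x ∈ NoLt lam, ∀ y ∈ NoLt lam, x + y ∈ NoLt lam) ∧
        (∀ x ∈ NoLt lam, -x ∈ NoLt lam)) ↔
      ∃ a : Ordinal, lam = Ordinal.omega0 ^ a :=
  noLt_isAddSubgroup_iff_general lam
end

section
/- (Generalized Newton–Puiseux theorem, MacLane) Let Γ be a divisible linearly ordered additive abelian group and K an algebraically closed field of characteristic 0. Then the Hahn series field HahnSeries Γ K is algebraically closed. -/
/-!
Suppose `p` has positive degree and no root. For an approximation `t`, expand
`p(t + X) = ∑ aⱼ Xʲ`. Divisibility of `Γ` provides the largest slope `γ` of the Newton polygon,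
and the initial form `Q` of `p(t + X)` along that edge has positive degree, hence a root `c` in
`K`. Any correction `s` with leading term `c • single γ 1` raises `ord p(t)`, since its initial
coefficient is `Q(c) = 0`, and also raises the slope: if `m` is the multiplicity of `c`, the
initial coefficient of the `m`-th Taylor coefficient at `t + s` is the `m`-th Hasse derivative
of `Q` at `c`, which is nonzero. So along a chain of improvements the approximations agree below
ever larger slopes and glue to a Hahn series improving all of them; Zorn's lemma then gives an
approximation that cannot be improved, which is absurd.
-/

open Polynomial Finset

theorem Polynomial.eval_hasseDeriv_rootMultiplicity_ne_zero {R : Type*} [CommRing R] {f : R[X]}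
    (hf : f ≠ 0) (r : R) : (hasseDeriv (f.rootMultiplicity r) f).eval r ≠ 0 := by
  rw [← taylor_coeff, rootMultiplicity_eq_natTrailingDegree, ← taylor_apply]
  exact coeff_natTrailingDegree_ne_zero.2 (mt (taylor_eq_zero r f).1 hf)

namespace HahnSeries

section Coeff

variable {Γ R : Type*} [AddCommMonoid Γ] [LinearOrder Γ] [IsOrderedCancelAddMonoid Γ]

theorem coeff_mul_of_le_orderTop [NonUnitalNonAssocSemiring R] {x y : HahnSeries Γ R} {a b : Γ}
    (hx : (a : WithTop Γ) ≤ x.orderTop) (hy : (b : WithTop Γ) ≤ y.orderTop) :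
    (x * y).coeff (a + b) = x.coeff a * y.coeff b := by
  rw [le_orderTop_iff_forall] at hx hy
  rw [coeff_mul, sum_eq_single (a, b)]
  · rintro ⟨i, j⟩ hij hne
    obtain hi | hi := lt_or_ge i a
    · rw [hx i (WithTop.coe_lt_coe.2 hi), zero_mul]
    obtain hj | hj := lt_or_ge j b
    · rw [hy j (WithTop.coe_lt_coe.2 hj), mul_zero]
    obtain ⟨rfl, rfl⟩ := (add_eq_add_iff_eq_and_eq hi hj).1 (mem_antidiagonal.1 hij).2.2.symm
    exact absurd rfl hne
  · intro hab
    by_contra hne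
    exact hab (mem_antidiagonal.2 ⟨left_ne_zero_of_mul hne, right_ne_zero_of_mul hne, rfl⟩)

theorem le_orderTop_pow [Semiring R] {x : HahnSeries Γ R} {a : Γ}
    (hx : (a : WithTop Γ) ≤ x.orderTop) (n : ℕ) :
    ((n • a : Γ) : WithTop Γ) ≤ (x ^ n).orderTop := by
  rw [WithTop.coe_nsmul]
  exact (nsmul_le_nsmul_right hx n).trans orderTop_nsmul_le_orderTop_pow

theorem coeff_pow_of_le_orderTop [Semiring R] {x : HahnSeries Γ R} {a : Γ}
    (hx : (a : WithTop Γ) ≤ x.orderTop) (n : ℕ) : (x ^ n).coeff (n • a) = x.coeff a ^ n := by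
  induction n with
  | zero => simp [coeff_one]
  | succ n ih =>
    rw [pow_succ, pow_succ, succ_nsmul, coeff_mul_of_le_orderTop (le_orderTop_pow hx n) hx, ih]

theorem coeff_natCast_mul [NonAssocSemiring R] (n : ℕ) (x : HahnSeries Γ R) (g : Γ) :
    ((n : HahnSeries Γ R) * x).coeff g = n * x.coeff g := by
  rw [← single_zero_natCast, coeff_single_zero_mul]

end Coeff

theorem exists_coeff_eq_of_pairwise_coeff_eq {Γ R ι : Type*} [LinearOrder Γ] [Zero R]
    (x : ι → HahnSeries Γ R) (b : ι → Γ)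
    (h : ∀ i j g, g < b i → g < b j → (x i).coeff g = (x j).coeff g) :
    ∃ y : HahnSeries Γ R, ∀ i, ∀ g < b i, y.coeff g = (x i).coeff g := by
  classical
  let f : Γ → R := fun g => if hg : ∃ i, g < b i then (x hg.choose).coeff g else 0
  have hf : ∀ i, ∀ g < b i, f g = (x i).coeff g := fun i g hg => by
    have hex : ∃ i, g < b i := ⟨i, hg⟩
    simp only [f, dif_pos hex]
    exact h _ _ g hex.choose_spec hg
  refine ⟨⟨f, Set.isPWO_iff_isWF.2 <| Set.isWF_iff_no_descending_seq.2 fun u hu hsupp => ?_⟩,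
    hf⟩
  obtain ⟨i, hi⟩ : ∃ i, u 0 < b i := by
    by_contra hne
    exact hsupp 0 (dif_neg hne)
  refine Set.isWF_iff_no_descending_seq.1 (x i).isWF_support u hu fun n => ?_
  rw [mem_support, ← hf i _ ((hu.antitone n.zero_le).trans_lt hi)]
  exact hsupp n

section InitialPoly

variable {Γ R : Type*} [AddCommGroup Γ] [LinearOrder Γ] [IsOrderedAddMonoid Γ] [CommRing R]
  {f : (HahnSeries Γ R)[X]} {δ γ : Γ} {s : HahnSeries Γ R}

/-- The initial form of `f` at level `δ` when `X` is given weight `γ`. -/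
noncomputable def initialPoly (f : (HahnSeries Γ R)[X]) (δ γ : Γ) : R[X] :=
  ∑ j ∈ range (f.natDegree + 1), monomial j ((f.coeff j).coeff (δ - j • γ))

theorem coeff_initialPoly (f : (HahnSeries Γ R)[X]) (δ γ : Γ) (j : ℕ) :
    (initialPoly f δ γ).coeff j = (f.coeff j).coeff (δ - j • γ) := by
  rw [initialPoly, finsetSum_coeff]
  simp only [coeff_monomial]
  rw [sum_ite_eq']
  split_ifs with hj
  · rfl
  · rw [coeff_eq_zero_of_natDegree_lt (by simpa [Nat.lt_succ_iff] using hj), coeff_zero]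

theorem natDegree_initialPoly_le (f : (HahnSeries Γ R)[X]) (δ γ : Γ) :
    (initialPoly f δ γ).natDegree ≤ f.natDegree :=
  natDegree_le_iff_coeff_eq_zero.2 fun j hj => by
    rw [coeff_initialPoly, coeff_eq_zero_of_natDegree_lt hj, coeff_zero]

theorem le_orderTop_coeff_mul_pow
    (hf : ∀ j, ((δ - j • γ : Γ) : WithTop Γ) ≤ (f.coeff j).orderTop)
    (hs : (γ : WithTop Γ) ≤ s.orderTop) (j : ℕ) :
    (δ : WithTop Γ) ≤ (f.coeff j * s ^ j).orderTop :=
  calc (δ : WithTop Γ) = ↑(δ - j • γ) + ↑(j • γ) := by rw [← WithTop.coe_add, sub_add_cancel]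
    _ ≤ (f.coeff j).orderTop + (s ^ j).orderTop := add_le_add (hf j) (le_orderTop_pow hs j)
    _ ≤ (f.coeff j * s ^ j).orderTop := orderTop_add_le_mul

theorem le_orderTop_eval
    (hf : ∀ j, ((δ - j • γ : Γ) : WithTop Γ) ≤ (f.coeff j).orderTop)
    (hs : (γ : WithTop Γ) ≤ s.orderTop) : (δ : WithTop Γ) ≤ (f.eval s).orderTop := by
  rw [le_orderTop_iff_forall]
  intro g hg
  rw [eval_eq_sum_range, coeff_sum]
  exact sum_eq_zero fun j _ =>
    coeff_eq_zero_of_lt_orderTop (hg.trans_le (le_orderTop_coeff_mul_pow hf hs j))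

theorem coeff_eval_eq_eval_initialPoly
    (hf : ∀ j, ((δ - j • γ : Γ) : WithTop Γ) ≤ (f.coeff j).orderTop)
    (hs : (γ : WithTop Γ) ≤ s.orderTop) :
    (f.eval s).coeff δ = (initialPoly f δ γ).eval (s.coeff γ) := by
  rw [eval_eq_sum_range, coeff_sum,
    eval_eq_sum_range' (Nat.lt_succ_of_le (natDegree_initialPoly_le f δ γ))]
  refine sum_congr rfl fun j _ => ?_
  rw [coeff_initialPoly, ← coeff_pow_of_le_orderTop hs, ← coeff_mul_of_le_orderTop (hf j),
    sub_add_cancel]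
  exact le_orderTop_pow hs j

theorem initialPoly_hasseDeriv (f : (HahnSeries Γ R)[X]) (δ γ : Γ) (m : ℕ) :
    initialPoly (hasseDeriv m f) (δ - m • γ) γ = hasseDeriv m (initialPoly f δ γ) := by
  ext j
  rw [coeff_initialPoly, hasseDeriv_coeff, hasseDeriv_coeff, coeff_natCast_mul, coeff_initialPoly,
    add_nsmul, sub_sub, add_comm (m • γ)]

theorem le_orderTop_coeff_hasseDeriv
    (hf : ∀ j, ((δ - j • γ : Γ) : WithTop Γ) ≤ (f.coeff j).orderTop) (m j : ℕ) :
    ((δ - m • γ - j • γ : Γ) : WithTop Γ) ≤ ((hasseDeriv m f).coeff j).orderTop := by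
  rw [le_orderTop_iff_forall]
  intro g hg
  rw [sub_sub, ← add_nsmul, add_comm m j] at hg
  rw [hasseDeriv_coeff, coeff_natCast_mul,
    coeff_eq_zero_of_lt_orderTop (hg.trans_le (hf (j + m))), mul_zero]

end InitialPoly

section NewtonPolygon

variable {Γ K : Type*} [AddCommGroup Γ] [LinearOrder Γ] [IsOrderedAddMonoid Γ] [DivisibleBy Γ ℕ]
  [Field K] {p : (HahnSeries Γ K)[X]} {t s : HahnSeries Γ K}

/-- The largest slope of the Newton polygon of `p(t + X)`, i.e. the least `γ` with
`ord p(t) ≤ ord aⱼ + j • γ` for every Taylor coefficient `aⱼ` of `p` at `t`. -/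
noncomputable def newtonSlope (p : (HahnSeries Γ K)[X]) (t : HahnSeries Γ K) : Γ :=
  if h : ((taylor t p).support.erase 0).Nonempty then
    ((taylor t p).support.erase 0).sup' h fun j =>
      DivisibleBy.div ((p.eval t).order - ((taylor t p).coeff j).order) j
  else 0

theorem sub_order_le_nsmul_newtonSlope {j : ℕ} (hj : j ∈ (taylor t p).support.erase 0) :
    (p.eval t).order - ((taylor t p).coeff j).order ≤ j • newtonSlope p t :=
  calc (p.eval t).order - ((taylor t p).coeff j).order
      = j • DivisibleBy.div ((p.eval t).order - ((taylor t p).coeff j).order) j :=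
        (DivisibleBy.div_cancel _ (ne_of_mem_erase hj)).symm
    _ ≤ j • newtonSlope p t := by
        rw [newtonSlope, dif_pos ⟨j, hj⟩]
        exact nsmul_le_nsmul_right (le_sup' (fun j =>
          DivisibleBy.div ((p.eval t).order - ((taylor t p).coeff j).order) j) hj) j

theorem exists_nsmul_newtonSlope_eq (hp : 0 < p.natDegree) :
    ∃ j ∈ (taylor t p).support.erase 0,
      j • newtonSlope p t = (p.eval t).order - ((taylor t p).coeff j).order := by
  have hne : ((taylor t p).support.erase 0).Nonempty := by
    refine ⟨p.natDegree, mem_erase.2 ⟨hp.ne', mem_support_iff.2 ?_⟩⟩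
    rw [coeff_taylor_natDegree, Polynomial.leadingCoeff_ne_zero]
    exact ne_zero_of_natDegree_gt hp
  obtain ⟨j, hj, hmax⟩ := exists_mem_eq_sup' hne fun j =>
    DivisibleBy.div ((p.eval t).order - ((taylor t p).coeff j).order) j
  refine ⟨j, hj, ?_⟩
  rw [newtonSlope, dif_pos hne, hmax, DivisibleBy.div_cancel _ (ne_of_mem_erase hj)]

theorem le_orderTop_coeff_taylor (ht : p.eval t ≠ 0) (j : ℕ) :
    (((p.eval t).order - j • newtonSlope p t : Γ) : WithTop Γ) ≤
      ((taylor t p).coeff j).orderTop := by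
  by_cases hj : j ∈ (taylor t p).support.erase 0
  · rw [← order_eq_orderTop_of_ne_zero (mem_support_iff.1 (mem_of_mem_erase hj)),
      WithTop.coe_le_coe]
    exact sub_le_comm.1 (sub_order_le_nsmul_newtonSlope hj)
  rw [mem_erase, mem_support_iff, not_and_or, not_not, not_not] at hj
  rcases hj with rfl | hj
  · rw [zero_smul, sub_zero, taylor_coeff_zero, order_eq_orderTop_of_ne_zero ht]
  · rw [hj, orderTop_zero]
    exact le_top

noncomputable def criticalPoly (p : (HahnSeries Γ K)[X]) (t : HahnSeries Γ K) : K[X] :=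
  initialPoly (taylor t p) (p.eval t).order (newtonSlope p t)

theorem coeff_zero_criticalPoly_ne_zero (ht : p.eval t ≠ 0) : (criticalPoly p t).coeff 0 ≠ 0 := by
  rw [criticalPoly, coeff_initialPoly, zero_smul, sub_zero, taylor_coeff_zero]
  exact coeff_order_eq_zero.not.2 ht

theorem degree_criticalPoly_pos (hp : 0 < p.natDegree) :
    0 < (criticalPoly p t).degree := by
  obtain ⟨j, hj, hslope⟩ := exists_nsmul_newtonSlope_eq (t := t) hp
  have hcoeff : (criticalPoly p t).coeff j ≠ 0 := by
    rw [criticalPoly, coeff_initialPoly, hslope, sub_sub_cancel]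
    exact coeff_order_eq_zero.not.2 (mem_support_iff.1 (mem_of_mem_erase hj))
  refine lt_of_lt_of_le ?_ (le_degree_of_ne_zero hcoeff)
  exact_mod_cast Nat.pos_of_ne_zero (ne_of_mem_erase hj)

theorem le_orderTop_eval_add (ht : p.eval t ≠ 0)
    (hs : ((newtonSlope p t : Γ) : WithTop Γ) ≤ s.orderTop) :
    ((p.eval t).order : WithTop Γ) ≤ (p.eval (t + s)).orderTop := by
  rw [add_comm, ← taylor_eval]
  exact le_orderTop_eval (le_orderTop_coeff_taylor ht) hs

theorem coeff_eval_add (ht : p.eval t ≠ 0)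
    (hs : ((newtonSlope p t : Γ) : WithTop Γ) ≤ s.orderTop) :
    (p.eval (t + s)).coeff (p.eval t).order =
      (criticalPoly p t).eval (s.coeff (newtonSlope p t)) := by
  rw [add_comm, ← taylor_eval]
  exact coeff_eval_eq_eval_initialPoly (le_orderTop_coeff_taylor ht) hs

theorem order_eval_lt_order_eval_add (ht : p.eval t ≠ 0)
    (hs : ((newtonSlope p t : Γ) : WithTop Γ) ≤ s.orderTop)
    (hroot : (criticalPoly p t).IsRoot (s.coeff (newtonSlope p t))) (hne : p.eval (t + s) ≠ 0) :
    (p.eval t).order < (p.eval (t + s)).order := by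
  rw [← WithTop.coe_lt_coe, order_eq_orderTop_of_ne_zero hne]
  refine (le_orderTop_eval_add ht hs).lt_of_ne (orderTop_ne_of_coeff_eq_zero ?_).symm
  rw [coeff_eval_add ht hs]
  exact hroot

theorem exists_order_coeff_taylor_add_eq (ht : p.eval t ≠ 0)
    (hs : ((newtonSlope p t : Γ) : WithTop Γ) ≤ s.orderTop)
    (hroot : (criticalPoly p t).IsRoot (s.coeff (newtonSlope p t))) :
    ∃ m ∈ (taylor (t + s) p).support.erase 0,
      ((taylor (t + s) p).coeff m).order = (p.eval t).order - m • newtonSlope p t := by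
  have hQ : criticalPoly p t ≠ 0 := fun h =>
    coeff_zero_criticalPoly_ne_zero ht (by rw [h, Polynomial.coeff_zero])
  set m := (criticalPoly p t).rootMultiplicity (s.coeff (newtonSlope p t))
  have hf := le_orderTop_coeff_hasseDeriv (le_orderTop_coeff_taylor ht) m
  have heq : (taylor (t + s) p).coeff m = (hasseDeriv m (taylor t p)).eval s := by
    rw [add_comm, ← taylor_taylor, taylor_coeff]
  have hcoeff :
      ((taylor (t + s) p).coeff m).coeff ((p.eval t).order - m • newtonSlope p t) ≠ 0 := by
    rw [heq, coeff_eval_eq_eval_initialPoly hf hs, initialPoly_hasseDeriv]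
    exact eval_hasseDeriv_rootMultiplicity_ne_zero hQ _
  have hne := ne_zero_of_coeff_ne_zero hcoeff
  refine ⟨m, mem_erase.2 ⟨((rootMultiplicity_pos hQ).2 hroot).ne', mem_support_iff.2 hne⟩, ?_⟩
  rw [← WithTop.coe_eq_coe, order_eq_orderTop_of_ne_zero hne]
  exact (orderTop_le_of_coeff_ne_zero hcoeff).antisymm (heq ▸ le_orderTop_eval hf hs)

theorem newtonSlope_lt_newtonSlope_add (ht : p.eval t ≠ 0)
    (hs : ((newtonSlope p t : Γ) : WithTop Γ) ≤ s.orderTop)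
    (hroot : (criticalPoly p t).IsRoot (s.coeff (newtonSlope p t))) (hne : p.eval (t + s) ≠ 0) :
    newtonSlope p t < newtonSlope p (t + s) := by
  obtain ⟨m, hm, hord⟩ := exists_order_coeff_taylor_add_eq ht hs hroot
  refine lt_of_nsmul_lt_nsmul_right m ?_
  calc m • newtonSlope p t = (p.eval t).order - ((taylor (t + s) p).coeff m).order := by
        rw [hord, sub_sub_cancel]
    _ < (p.eval (t + s)).order - ((taylor (t + s) p).coeff m).order :=
        sub_lt_sub_right (order_eval_lt_order_eval_add ht hs hroot hne) _
    _ ≤ m • newtonSlope p (t + s) := sub_order_le_nsmul_newtonSlope hm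

def Improves (p : (HahnSeries Γ K)[X]) (t t' : HahnSeries Γ K) : Prop :=
  ((newtonSlope p t : Γ) : WithTop Γ) ≤ (t' - t).orderTop ∧
    (criticalPoly p t).IsRoot ((t' - t).coeff (newtonSlope p t))

namespace Improves

variable {t' t'' u : HahnSeries Γ K}

theorem coeff_eq (h : Improves p t t') {g : Γ} (hg : g < newtonSlope p t) :
    t'.coeff g = t.coeff g := by
  rw [← sub_eq_zero, ← coeff_sub]
  exact coeff_eq_zero_of_lt_orderTop ((WithTop.coe_lt_coe.2 hg).trans_le h.1)

theorem of_coeff_eq (h : Improves p t t') (hu : ∀ g ≤ newtonSlope p t, u.coeff g = t'.coeff g) :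
    Improves p t u := by
  have hsub : ∀ g ≤ newtonSlope p t, (u - t).coeff g = (t' - t).coeff g := fun g hg => by
    rw [coeff_sub, coeff_sub, hu g hg]
  refine ⟨le_orderTop_iff_forall.2 fun g hg => ?_, by rw [hsub _ le_rfl]; exact h.2⟩
  rw [hsub g (WithTop.coe_lt_coe.1 hg).le]
  exact coeff_eq_zero_of_lt_orderTop (hg.trans_le h.1)

theorem newtonSlope_lt (hroots : ∀ x, p.eval x ≠ 0) (h : Improves p t t') :
    newtonSlope p t < newtonSlope p t' := by
  simpa using newtonSlope_lt_newtonSlope_add (hroots t) h.1 h.2 (by simpa using hroots t')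

theorem irrefl (hroots : ∀ x, p.eval x ≠ 0) : ¬Improves p t t := fun h => by
  simpa using order_eval_lt_order_eval_add (hroots t) h.1 h.2 (by simpa using hroots t)

theorem trans (hroots : ∀ x, p.eval x ≠ 0) (h : Improves p t t') (h' : Improves p t' t'') :
    Improves p t t'' :=
  h.of_coeff_eq fun _ hg => h'.coeff_eq (hg.trans_lt (h.newtonSlope_lt hroots))

end Improves

theorem exists_improves_of_isChain (hroots : ∀ x, p.eval x ≠ 0) {c : Set (HahnSeries Γ K)}
    (hc : IsChain (fun a b => a = b ∨ Improves p a b) c) :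
    ∃ u, ∀ a ∈ c, a = u ∨ Improves p a u := by
  by_cases hmax : ∃ m ∈ c, ∀ a ∈ c, a = m ∨ Improves p a m
  · obtain ⟨m, -, hm⟩ := hmax
    exact ⟨m, hm⟩
  push Not at hmax
  have hstep : ∀ a ∈ c, ∃ a' ∈ c, Improves p a a' := fun a ha => by
    obtain ⟨a', ha', hne, hnot⟩ := hmax a ha
    refine ⟨a', ha', ?_⟩
    rcases hc ha ha' hne.symm with h | h
    · exact h.resolve_left hne.symm
    · exact absurd (h.resolve_left hne) hnot
  have hagree : ∀ a b : c, ∀ g, g < newtonSlope p a → g < newtonSlope p b →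
      (a : HahnSeries Γ K).coeff g = (b : HahnSeries Γ K).coeff g := by
    rintro ⟨a, ha⟩ ⟨b, hb⟩ g hga hgb
    rcases eq_or_ne a b with rfl | hab
    · rfl
    rcases hc ha hb hab with (rfl | h) | (rfl | h)
    · rfl
    · exact (h.coeff_eq hga).symm
    · rfl
    · exact h.coeff_eq hgb
  obtain ⟨u, hu⟩ := exists_coeff_eq_of_pairwise_coeff_eq _ _ hagree
  refine ⟨u, fun a ha => Or.inr ?_⟩
  obtain ⟨a', ha', h⟩ := hstep a ha
  exact h.of_coeff_eq fun g hg => hu ⟨a', ha'⟩ g (hg.trans_lt (h.newtonSlope_lt hroots))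

theorem exists_eval_eq_zero [IsAlgClosed K] (hp : 0 < p.natDegree) : ∃ x, p.eval x = 0 := by
  by_contra! hroots
  obtain ⟨t, ht⟩ := exists_maximal_of_chains_bounded
    (fun _ hc => exists_improves_of_isChain hroots hc) fun {a b c} hab hbc => by
      rcases hab with rfl | hab
      · exact hbc
      rcases hbc with rfl | hbc
      · exact Or.inr hab
      · exact Or.inr (hab.trans hroots hbc)
  obtain ⟨r, hr⟩ := IsAlgClosed.exists_root (criticalPoly p t) (degree_criticalPoly_pos hp).ne'
  have hstep : Improves p t (t + single (newtonSlope p t) r) := by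
    rw [Improves, add_sub_cancel_left, coeff_single_same]
    exact ⟨orderTop_single_le, hr⟩
  rcases ht _ (Or.inr hstep) with h | h
  · rw [h] at hstep
    exact Improves.irrefl hroots hstep
  · exact Improves.irrefl hroots (hstep.trans hroots h)

end NewtonPolygon

end HahnSeries

theorem hahnSeries_isAlgClosed_general {Γ K : Type*} [AddCommGroup Γ] [LinearOrder Γ]
    [IsOrderedAddMonoid Γ]
    [Field K] [IsAlgClosed K]
    (hdiv : ∀ (g : Γ) (n : ℕ), 0 < n → ∃ g' : Γ, n • g' = g) :
    IsAlgClosed (HahnSeries Γ K) := by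
  let : DivisibleBy Γ ℕ :=
    { div := fun g n => if hn : 0 < n then (hdiv g n hn).choose else 0
      div_zero := fun _ => dif_neg (lt_irrefl 0)
      div_cancel := fun {n} g hn => by
        rw [dif_pos (Nat.pos_of_ne_zero hn)]
        exact (hdiv g n (Nat.pos_of_ne_zero hn)).choose_spec }
  exact IsAlgClosed.of_exists_root _ fun _ _ hirr =>
    HahnSeries.exists_eval_eq_zero hirr.natDegree_pos

/-- Generalized Newton–Puiseux theorem (MacLane): if `Γ` is a divisible linearly ordered
abelian group and `K` an algebraically closed field of characteristic 0, then the Hahn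
series field `HahnSeries Γ K` is algebraically closed. -/
theorem hahnSeries_isAlgClosed {Γ K : Type*} [AddCommGroup Γ] [LinearOrder Γ]
    [IsOrderedAddMonoid Γ]
    [Field K] [IsAlgClosed K] [CharZero K]
    (hdiv : ∀ (g : Γ) (n : ℕ), 0 < n → ∃ g' : Γ, n • g' = g) :
    IsAlgClosed (HahnSeries Γ K) :=
  hahnSeries_isAlgClosed_general hdiv
end
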